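/- For every r ∈ ℝ^N_{>0} the extended curvature vector K̃(r) = (K̃_1,…,K̃_N) lies in Ȳ; explicitly, Σ_{i=1}^N K̃_i = 2πχ(M), and for every nonempty proper subset A ⊂ V one has Σ_{i∈A} K̃_i ≥ −Σ_{(e,v)∈Lk(A)} (π − Λ(I_e)) + 2πχ(F_A). -/
import Mathlib


open Real Filter Topology

namespace IDCP

variable {N : ℕ}

/-- The set of edges: 2-element subsets of vertices contained in some face. -/
def edges (Fc : Finset (Finset (Fin N))) : Finset (Finset (Fin N)) :=
  Fc.biUnion fun f => f.powersetCard 2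

/-- `Fc` is the face set of a triangulation of a closed connected surface:
every face has 3 vertices, every edge lies in exactly two faces, and the
1-skeleton is connected. -/
structure IsTriangulation (Fc : Finset (Finset (Fin N))) : Prop where
  card3 : ∀ f ∈ Fc, f.card = 3
  edge2 : ∀ e ∈ edges Fc, (Fc.filter fun f => e ⊆ f).card = 2
  conn : (SimpleGraph.fromRel fun i j => ({i, j} : Finset (Fin N)) ∈ edges Fc).Connected

/-- Euler characteristic χ(M) = N − |E| + |F|. -/
def chi (Fc : Finset (Finset (Fin N))) : ℤ :=
  (N : ℤ) - ((edges Fc).card : ℤ) + (Fc.card : ℤ)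

/-- Edge length l_ij = √(r_i² + r_j² + 2 r_i r_j I_{ij}). -/
noncomputable def len (I : Finset (Fin N) → ℝ) (r : Fin N → ℝ) (i j : Fin N) : ℝ :=
  Real.sqrt (r i ^ 2 + r j ^ 2 + 2 * r i * r j * I {i, j})

/-- The cosine of the inner angle at `i` in triangle `{i,j,k}`. -/
noncomputable def cosAng (I : Finset (Fin N) → ℝ) (r : Fin N → ℝ) (i j k : Fin N) : ℝ :=
  (len I r i j ^ 2 + len I r i k ^ 2 - len I r j k ^ 2) / (2 * len I r i j * len I r i k)

/-- The auxiliary function Λ. -/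
noncomputable def Lam (x : ℝ) : ℝ :=
  if x ≤ -1 then π else if x ≤ 1 then Real.arccos x else 0

/-- Discrete Gaussian curvature K_i = 2π − Σ_{{i,j,k}∈F} θ_i^{jk}.  Every face
containing `i` appears exactly twice (once for each ordering of `j,k`), whence
the factor 1/2. -/
noncomputable def K (Fc : Finset (Finset (Fin N))) (I : Finset (Fin N) → ℝ)
    (r : Fin N → ℝ) (i : Fin N) : ℝ :=
  2 * π - (1 / 2) * ∑ j, ∑ k,
    (if ({i, j, k} : Finset (Fin N)) ∈ Fc then Real.arccos (cosAng I r i j k) else 0)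

/-- Extended curvature K̃_i = 2π − Σ θ̃_i^{jk}, using the generalized angles Λ. -/
noncomputable def Kt (Fc : Finset (Finset (Fin N))) (I : Finset (Fin N) → ℝ)
    (r : Fin N → ℝ) (i : Fin N) : ℝ :=
  2 * π - (1 / 2) * ∑ j, ∑ k,
    (if ({i, j, k} : Finset (Fin N)) ∈ Fc then Lam (cosAng I r i j k) else 0)

/-- The set Ω of inversive distance circle packing metrics. -/
def Omega (Fc : Finset (Finset (Fin N))) (I : Finset (Fin N) → ℝ) : Set (Fin N → ℝ) :=
  {r | (∀ i, 0 < r i) ∧ ∀ i j k : Fin N, ({i, j, k} : Finset (Fin N)) ∈ Fc →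
    len I r j k < len I r i j + len I r i k}

/-- s_α = 2πχ(M)/‖r‖_α^α. -/
noncomputable def sA (Fc : Finset (Finset (Fin N))) (α : ℝ) (r : Fin N → ℝ) : ℝ :=
  2 * π * (chi Fc : ℝ) / ∑ j, r j ^ α

/-- Back from u-coordinates: r_i = e^{u_i}. -/
noncomputable def rOf (u : Fin N → ℝ) : Fin N → ℝ := fun i => Real.exp (u i)

/-- ln Ω, the image of Ω under the coordinate change r ↦ u, u_i = ln r_i. -/
def lnOmega (Fc : Finset (Finset (Fin N))) (I : Finset (Fin N) → ℝ) : Set (Fin N → ℝ) :=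
  {u | rOf u ∈ Omega Fc I}

/-- `u` solves the α-flow du_i/dt = s_α r_i^α − K_i on the time set `D`,
staying in ln Ω. -/
def IsFlowSol (Fc : Finset (Finset (Fin N))) (I : Finset (Fin N) → ℝ) (α : ℝ)
    (D : Set ℝ) (u : ℝ → Fin N → ℝ) : Prop :=
  ∀ t ∈ D, rOf (u t) ∈ Omega Fc I ∧
    ∀ i, HasDerivWithinAt (fun s => u s i)
      (sA Fc α (rOf (u t)) * rOf (u t) i ^ α - K Fc I (rOf (u t)) i) D t

/-- `u` solves the extended α-flow du_i/dt = s_α r_i^α − K̃_i on the time set `D`. -/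
def IsExtFlowSol (Fc : Finset (Finset (Fin N))) (I : Finset (Fin N) → ℝ) (α : ℝ)
    (D : Set ℝ) (u : ℝ → Fin N → ℝ) : Prop :=
  ∀ t ∈ D, ∀ i, HasDerivWithinAt (fun s => u s i)
      (sA Fc α (rOf (u t)) * rOf (u t) i ^ α - Kt Fc I (rOf (u t)) i) D t

/-- Lk(A): pairs (e,v) with both endpoints of e outside A, v ∈ A, and e,v spanning a face. -/
def Lk (Fc : Finset (Finset (Fin N))) (A : Finset (Fin N)) :
    Finset (Finset (Fin N) × Fin N) :=
  ((edges Fc) ×ˢ (Finset.univ : Finset (Fin N))).filter fun p =>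
    (∀ x ∈ p.1, x ∉ A) ∧ p.2 ∈ A ∧ insert p.2 p.1 ∈ Fc

/-- Euler characteristic χ(F_A) of the subcomplex spanned by A. -/
def chiSub (Fc : Finset (Finset (Fin N))) (A : Finset (Fin N)) : ℤ :=
  (A.card : ℤ) - (((edges Fc).filter (fun e => e ⊆ A)).card : ℤ)
    + ((Fc.filter (fun f => f ⊆ A)).card : ℤ)

/-- The lower bound −Σ_{(e,v)∈Lk(A)}(π − Λ(I_e)) + 2πχ(F_A) defining Y_A. -/
noncomputable def Ybound (Fc : Finset (Finset (Fin N))) (I : Finset (Fin N) → ℝ)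
    (A : Finset (Fin N)) : ℝ :=
  -(∑ p ∈ Lk Fc A, (π - Lam (I p.1))) + 2 * π * (chiSub Fc A : ℝ)

/-- x ∈ Y. -/
noncomputable def memY (Fc : Finset (Finset (Fin N))) (I : Finset (Fin N) → ℝ)
    (x : Fin N → ℝ) : Prop :=
  (∑ i, x i) = 2 * π * (chi Fc : ℝ) ∧
    ∀ A : Finset (Fin N), A.Nonempty → A ≠ Finset.univ → Ybound Fc I A < ∑ i ∈ A, x i

/-- x ∈ Ȳ. -/
noncomputable def memYbar (Fc : Finset (Finset (Fin N))) (I : Finset (Fin N) → ℝ)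
    (x : Fin N → ℝ) : Prop :=
  (∑ i, x i) = 2 * π * (chi Fc : ℝ) ∧
    ∀ A : Finset (Fin N), A.Nonempty → A ≠ Finset.univ → Ybound Fc I A ≤ ∑ i ∈ A, x i


/-! ### Auxiliary lemmas -/

lemma arccos_antitone : Antitone Real.arccos := fun x y h => by
  simp only [Real.arccos_eq_pi_div_two_sub_arcsin]
  linarith [Real.monotone_arcsin h]

lemma arccos_triangle_sum {a b c : ℝ} (ha : 0 < a) (hb : 0 < b) (hc : 0 < c) :
    arccos ((b^2+c^2-a^2)/(2*b*c)) + arccos ((a^2+c^2-b^2)/(2*a*c))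
      + arccos ((a^2+b^2-c^2)/(2*a*b)) = π := by
  rcases le_or_gt (b+c) a with h | h1
  · rw [Real.arccos_of_le_neg_one, Real.arccos_of_one_le, Real.arccos_of_one_le]
    · ring
    · rw [le_div_iff₀ (by positivity)]; nlinarith
    · rw [le_div_iff₀ (by positivity)]; nlinarith
    · rw [div_le_iff₀ (by positivity)]; nlinarith
  rcases le_or_gt (a+c) b with h | h2
  · rw [Real.arccos_of_one_le, Real.arccos_of_le_neg_one, Real.arccos_of_one_le]
    · ring
    · rw [le_div_iff₀ (by positivity)]; nlinarith
    · rw [div_le_iff₀ (by positivity)]; nlinarith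
    · rw [le_div_iff₀ (by positivity)]; nlinarith
  rcases le_or_gt (a+b) c with h | h3
  · rw [Real.arccos_of_one_le, Real.arccos_of_one_le, Real.arccos_of_le_neg_one]
    · ring
    · rw [div_le_iff₀ (by positivity)]; nlinarith
    · rw [le_div_iff₀ (by positivity)]; nlinarith
    · rw [le_div_iff₀ (by positivity)]; nlinarith
  -- genuine triangle
  set x₁ := (b^2+c^2-a^2)/(2*b*c) with hx₁
  set x₂ := (a^2+c^2-b^2)/(2*a*c) with hx₂
  set x₃ := (a^2+b^2-c^2)/(2*a*b) with hx₃
  have hx₁l : -1 < x₁ := by rw [hx₁, lt_div_iff₀ (by positivity)]; nlinarith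
  have hx₁u : x₁ < 1 := by rw [hx₁, div_lt_iff₀ (by positivity)]; nlinarith
  have hx₂l : -1 < x₂ := by rw [hx₂, lt_div_iff₀ (by positivity)]; nlinarith
  have hx₂u : x₂ < 1 := by rw [hx₂, div_lt_iff₀ (by positivity)]; nlinarith
  have hx₃l : -1 < x₃ := by rw [hx₃, lt_div_iff₀ (by positivity)]; nlinarith
  have hx₃u : x₃ < 1 := by rw [hx₃, div_lt_iff₀ (by positivity)]; nlinarith
  set A := arccos x₁
  set B := arccos x₂
  have hsum : -x₂ < x₁ := by
    have : 0 < x₁ + x₂ := by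
      rw [hx₁, hx₂, div_add_div _ _ (by positivity) (by positivity), lt_div_iff₀ (by positivity)]
      nlinarith [mul_pos (mul_pos (add_pos ha hb) (show (0:ℝ) < b + c - a by linarith))
        (show (0:ℝ) < c + a - b by linarith)]
    linarith
  have hABlt : A + B < π := by
    have : A < arccos (-x₂) := Real.strictAntiOn_arccos ⟨by linarith, by linarith⟩
      ⟨hx₁l.le, hx₁u.le⟩ hsum
    rw [Real.arccos_neg] at this
    linarith
  have hA0 : 0 ≤ A := Real.arccos_nonneg _
  have hB0 : 0 ≤ B := Real.arccos_nonneg _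
  have key : arccos x₃ = π - (A + B) := by
    apply Real.arccos_eq_of_eq_cos (by linarith) (by linarith)
    rw [Real.cos_pi_sub, Real.cos_add, Real.cos_arccos hx₁l.le hx₁u.le,
      Real.cos_arccos hx₂l.le hx₂u.le, Real.sin_arccos, Real.sin_arccos]
    have f1 : (0:ℝ) < (b+c)^2 - a^2 := by nlinarith
    have f2 : (0:ℝ) < a^2 - (b-c)^2 := by nlinarith
    have hD : (0:ℝ) ≤ 4*b^2*c^2 - (b^2+c^2-a^2)^2 := by nlinarith [mul_pos f1 f2]
    have h1 : 1 - x₁^2 = (4*b^2*c^2 - (b^2+c^2-a^2)^2)/(2*b*c)^2 := by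
      rw [hx₁]; field_simp; ring
    have h2 : 1 - x₂^2 = (4*b^2*c^2 - (b^2+c^2-a^2)^2)/(2*a*c)^2 := by
      rw [hx₂]; field_simp; ring
    rw [h1, h2, Real.sqrt_div hD, Real.sqrt_div hD,
      Real.sqrt_sq (by positivity : (0:ℝ) ≤ 2*b*c), Real.sqrt_sq (by positivity : (0:ℝ) ≤ 2*a*c)]
    have hprod : √(4*b^2*c^2 - (b^2+c^2-a^2)^2)/(2*b*c) * (√(4*b^2*c^2 - (b^2+c^2-a^2)^2)/(2*a*c))
        = (4*b^2*c^2 - (b^2+c^2-a^2)^2)/(2*b*c*(2*a*c)) := by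
      rw [div_mul_div_comm, Real.mul_self_sqrt hD]
    rw [hprod, hx₁, hx₂, hx₃, div_mul_div_comm, neg_sub, ← sub_div,
      div_eq_div_iff (by positivity) (by positivity)]
    ring
  linarith [key]

lemma lam_eq (x : ℝ) : Lam x = Real.arccos x := by
  unfold Lam
  split_ifs with h1 h2
  · exact (Real.arccos_of_le_neg_one h1).symm
  · rfl
  · exact (Real.arccos_of_one_le (by linarith)).symm

lemma lam_nonneg (x : ℝ) : 0 ≤ Lam x := by rw [lam_eq]; exact Real.arccos_nonneg x

lemma len_symm (I : Finset (Fin N) → ℝ) (r : Fin N → ℝ) (i j : Fin N) :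
    len I r i j = len I r j i := by
  unfold len
  rw [Finset.pair_comm i j]
  ring_nf

lemma len_pos {I : Finset (Fin N) → ℝ} {r : Fin N → ℝ} {i j : Fin N}
    (hI : 0 ≤ I {i, j}) (hi : 0 < r i) (hj : 0 < r j) : 0 < len I r i j := by
  unfold len
  apply Real.sqrt_pos.2
  nlinarith [mul_nonneg (mul_nonneg (by positivity : (0:ℝ) ≤ 2 * r i) hj.le) hI]

lemma len_sq {I : Finset (Fin N) → ℝ} {r : Fin N → ℝ} {i j : Fin N}
    (hI : 0 ≤ I {i, j}) (hi : 0 < r i) (hj : 0 < r j) :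
    len I r i j ^ 2 = r i ^ 2 + r j ^ 2 + 2 * r i * r j * I {i, j} := by
  unfold len
  apply Real.sq_sqrt
  nlinarith [mul_nonneg (mul_nonneg (by positivity : (0:ℝ) ≤ 2 * r i) hj.le) hI]

lemma len_ge {I : Finset (Fin N) → ℝ} {r : Fin N → ℝ} {i j : Fin N}
    (hI : 0 ≤ I {i, j}) (hi : 0 < r i) (hj : 0 < r j) : r j ≤ len I r i j := by
  unfold len
  rw [show r i ^ 2 + r j ^ 2 + 2 * r i * r j * I {i, j}
      = r j ^ 2 + (r i ^ 2 + 2 * r i * r j * I {i, j}) by ring]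
  refine le_trans ?_ (Real.sqrt_le_sqrt (by nlinarith [mul_nonneg (mul_nonneg
    (by positivity : (0:ℝ) ≤ 2 * r i) hj.le) hI] : r j ^ 2 ≤ _))
  rw [Real.sqrt_sq hj.le]

lemma cosAng_symm (I : Finset (Fin N) → ℝ) (r : Fin N → ℝ) (i j k : Fin N) :
    cosAng I r i j k = cosAng I r i k j := by
  unfold cosAng
  rw [len_symm I r k j]
  ring

/-- The key geometric estimate: the generalized angle at `i` is at most
`π - Λ(I_{jk})`. -/
lemma lam_cosAng_le {I : Finset (Fin N) → ℝ} {r : Fin N → ℝ} {i j k : Fin N}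
    (hij : 0 ≤ I {i, j}) (hik : 0 ≤ I {i, k}) (hjk : 0 ≤ I {j, k})
    (hr : ∀ v, 0 < r v) :
    Lam (cosAng I r i j k) ≤ π - Lam (I {j, k}) := by
  have l1 : 0 < len I r i j := len_pos hij (hr i) (hr j)
  have l2 : 0 < len I r i k := len_pos hik (hr i) (hr k)
  have hri := hr i
  have hrj := hr j
  have hrk := hr k
  have hge : -I {j, k} ≤ cosAng I r i j k := by
    unfold cosAng
    rw [le_div_iff₀ (by positivity)]
    rw [len_sq hij (hr i) (hr j), len_sq hik (hr i) (hr k), len_sq hjk (hr j) (hr k)]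
    have g1 : r j ≤ len I r i j := len_ge hij (hr i) (hr j)
    have g2 : r k ≤ len I r i k := len_ge hik (hr i) (hr k)
    have g3 : I {j, k} * (r j * r k) ≤ I {j, k} * (len I r i j * len I r i k) := by
      apply mul_le_mul_of_nonneg_left _ hjk
      exact mul_le_mul g1 g2 (hr k).le l1.le
    nlinarith [mul_nonneg (mul_nonneg (by positivity : (0:ℝ) ≤ 2 * r i) (hr j).le) hij,
      mul_nonneg (mul_nonneg (by positivity : (0:ℝ) ≤ 2 * r i) (hr k).le) hik,
      sq_nonneg (r i), (hr i)]
  rw [lam_eq, lam_eq, ← Real.arccos_neg]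
  exact arccos_antitone hge

/-- The generalized angles of a (possibly degenerate) triangle sum to `π`. -/
lemma lam_cos_sum {I : Finset (Fin N) → ℝ} {r : Fin N → ℝ} {i j k : Fin N}
    (hij : 0 ≤ I {i, j}) (hik : 0 ≤ I {i, k}) (hjk : 0 ≤ I {j, k})
    (hr : ∀ v, 0 < r v) :
    Lam (cosAng I r i j k) + Lam (cosAng I r j i k) + Lam (cosAng I r k i j) = π := by
  have l1 : 0 < len I r i j := len_pos hij (hr i) (hr j)
  have l2 : 0 < len I r i k := len_pos hik (hr i) (hr k)
  have l3 : 0 < len I r j k := len_pos hjk (hr j) (hr k)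
  have e1 : cosAng I r i j k
      = (len I r i k ^ 2 + len I r i j ^ 2 - len I r j k ^ 2)
        / (2 * len I r i k * len I r i j) := by
    unfold cosAng; ring
  have e2 : cosAng I r j i k
      = (len I r j k ^ 2 + len I r i j ^ 2 - len I r i k ^ 2)
        / (2 * len I r j k * len I r i j) := by
    unfold cosAng; rw [len_symm I r j i]; ring
  have e3 : cosAng I r k i j
      = (len I r j k ^ 2 + len I r i k ^ 2 - len I r i j ^ 2)
        / (2 * len I r j k * len I r i k) := by
    unfold cosAng; rw [len_symm I r k i, len_symm I r k j]; ring
  rw [lam_eq, lam_eq, lam_eq, e1, e2, e3]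
  exact arccos_triangle_sum l3 l2 l1


/-! ### Combinatorial lemmas -/

/-- The angle of face `f` at vertex `i` (one half of the symmetrized double sum). -/
noncomputable def ang (I : Finset (Fin N) → ℝ) (r : Fin N → ℝ) (f : Finset (Fin N))
    (i : Fin N) : ℝ :=
  (1 / 2) * ∑ j, ∑ k, (if ({i, j, k} : Finset (Fin N)) = f then Lam (cosAng I r i j k) else 0)

lemma Kt_eq (Fc : Finset (Finset (Fin N))) (I : Finset (Fin N) → ℝ) (r : Fin N → ℝ)
    (i : Fin N) : Kt Fc I r i = 2 * π - ∑ f ∈ Fc, ang I r f i := by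
  unfold Kt
  have h : ∀ j k : Fin N, (if ({i, j, k} : Finset (Fin N)) ∈ Fc then Lam (cosAng I r i j k) else 0)
      = ∑ f ∈ Fc, (if ({i, j, k} : Finset (Fin N)) = f then Lam (cosAng I r i j k) else 0) :=
    fun j k => (Finset.sum_ite_eq Fc ({i, j, k}) (fun _ => Lam (cosAng I r i j k))).symm
  simp_rw [h]
  congr 1
  unfold ang
  conv_rhs => rw [← Finset.mul_sum]
  congr 1
  conv_rhs => rw [Finset.sum_comm]
  exact Finset.sum_congr rfl fun j _ => Finset.sum_comm

lemma ang_nonneg (I : Finset (Fin N) → ℝ) (r : Fin N → ℝ) (f : Finset (Fin N))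
    (i : Fin N) : 0 ≤ ang I r f i := by
  unfold ang
  apply mul_nonneg (by norm_num)
  refine Finset.sum_nonneg fun j _ => Finset.sum_nonneg fun k _ => ?_
  split
  · exact lam_nonneg _
  · exact le_rfl

lemma ang_of_notMem (I : Finset (Fin N) → ℝ) (r : Fin N → ℝ) {f : Finset (Fin N)}
    {i : Fin N} (h : i ∉ f) : ang I r f i = 0 := by
  unfold ang
  rw [mul_eq_zero]; right
  refine Finset.sum_eq_zero fun j _ => Finset.sum_eq_zero fun k _ => ?_
  rw [if_neg]
  intro hf
  exact h (hf ▸ (by simp : i ∈ ({i, j, k} : Finset (Fin N))))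

lemma triple_eq_iff {a b c j k : Fin N} (hab : a ≠ b) (hac : a ≠ c) (hbc : b ≠ c) :
    ({a, j, k} : Finset (Fin N)) = {a, b, c} ↔ (j = b ∧ k = c) ∨ (j = c ∧ k = b) := by
  constructor
  · intro h
    have hb : b = a ∨ b = j ∨ b = k := by
      have : b ∈ ({a, j, k} : Finset (Fin N)) := by rw [h]; simp
      simpa using this
    have hc : c = a ∨ c = j ∨ c = k := by
      have : c ∈ ({a, j, k} : Finset (Fin N)) := by rw [h]; simp
      simpa using this
    rcases hb with hb | hb | hb
    · exact absurd hb.symm hab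
    · rcases hc with hc | hc | hc
      · exact absurd hc.symm hac
      · exact absurd (hb.trans hc.symm) hbc
      · exact Or.inl ⟨hb.symm, hc.symm⟩
    · rcases hc with hc | hc | hc
      · exact absurd hc.symm hac
      · exact Or.inr ⟨hc.symm, hb.symm⟩
      · exact absurd (hb.trans hc.symm) hbc
  · rintro (⟨rfl, rfl⟩ | ⟨rfl, rfl⟩)
    · rfl
    · ext x; simp; tauto

lemma ang_eq (I : Finset (Fin N) → ℝ) (r : Fin N → ℝ) {a b c : Fin N}
    (hab : a ≠ b) (hac : a ≠ c) (hbc : b ≠ c) :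
    ang I r ({a, b, c} : Finset (Fin N)) a = Lam (cosAng I r a b c) := by
  unfold ang
  rw [← Finset.sum_product']
  have hsub : ({(b, c), (c, b)} : Finset (Fin N × Fin N)) ⊆ Finset.univ ×ˢ Finset.univ := by
    intro p _; simp
  rw [← Finset.sum_subset hsub ?_]
  · rw [Finset.sum_pair (by simp [hbc] : ((b, c) : Fin N × Fin N) ≠ (c, b))]
    have h1 : ({a, b, c} : Finset (Fin N)) = {a, b, c} := rfl
    have h2 : ({a, c, b} : Finset (Fin N)) = {a, b, c} := by ext x; simp; tauto
    simp only [if_pos h1, if_pos h2, if_true]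
    rw [cosAng_symm I r a c b]
    ring
  · intro p _ hp
    rw [if_neg]
    intro hf
    rcases (triple_eq_iff hab hac hbc).1 hf with ⟨h1, h2⟩ | ⟨h1, h2⟩
    · exact hp (by simp [Prod.ext_iff, h1, h2])
    · exact hp (by simp [Prod.ext_iff, h1, h2])

lemma sub_mem_edges {Fc : Finset (Finset (Fin N))} {f e : Finset (Fin N)}
    (hf : f ∈ Fc) (hef : e ⊆ f) (he : e.card = 2) : e ∈ edges Fc :=
  Finset.mem_biUnion.2 ⟨f, hf, Finset.mem_powersetCard.2 ⟨hef, he⟩⟩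

lemma pair_mem_edges {Fc : Finset (Finset (Fin N))} {f : Finset (Fin N)}
    (hf : f ∈ Fc) {x y : Fin N} (hx : x ∈ f) (hy : y ∈ f) (hxy : x ≠ y) :
    ({x, y} : Finset (Fin N)) ∈ edges Fc :=
  sub_mem_edges hf (by intro z hz; simp at hz; rcases hz with rfl | rfl <;> assumption)
    (Finset.card_pair hxy)

lemma edges_card {Fc : Finset (Finset (Fin N))} {e : Finset (Fin N)}
    (he : e ∈ edges Fc) : e.card = 2 := by
  obtain ⟨f, _, hf⟩ := Finset.mem_biUnion.1 he
  exact (Finset.mem_powersetCard.1 hf).2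

/-- The generalized angles of a face sum to π. -/
lemma sum_ang_face {Fc : Finset (Finset (Fin N))} (hT : IsTriangulation Fc)
    {I : Finset (Fin N) → ℝ} (hI : ∀ e ∈ edges Fc, 0 ≤ I e)
    {r : Fin N → ℝ} (hr : ∀ i, 0 < r i) {f : Finset (Fin N)} (hf : f ∈ Fc) :
    ∑ i ∈ f, ang I r f i = π := by
  obtain ⟨a, b, c, hab, hac, hbc, rfl⟩ := Finset.card_eq_three.1 (hT.card3 f hf)
  rw [show (∑ i ∈ ({a, b, c} : Finset (Fin N)), ang I r {a, b, c} i)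
      = ang I r {a, b, c} a + (ang I r {a, b, c} b + ang I r {a, b, c} c) by
    rw [Finset.sum_insert (by simp [hab, hac]), Finset.sum_pair hbc]]
  have e2 : ({a, b, c} : Finset (Fin N)) = {b, a, c} := by ext x; simp; tauto
  have e3 : ({a, b, c} : Finset (Fin N)) = {c, a, b} := by ext x; simp; tauto
  have hb : ang I r ({a, b, c} : Finset (Fin N)) b = Lam (cosAng I r b a c) := by
    rw [e2]; exact ang_eq I r hab.symm hbc hac
  have hc : ang I r ({a, b, c} : Finset (Fin N)) c = Lam (cosAng I r c a b) := by
    rw [e3]; exact ang_eq I r hac.symm hbc.symm hab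
  rw [ang_eq I r hab hac hbc, hb, hc]
  have := lam_cos_sum (hI _ (pair_mem_edges hf (by simp) (by simp) hab))
    (hI _ (pair_mem_edges hf (by simp) (by simp) hac))
    (hI _ (pair_mem_edges hf (by simp) (by simp) hbc)) hr
  linarith

/-- Counting: 2|E_A| = Σ_f C(|f∩A|, 2). -/
lemma count_EA {Fc : Finset (Finset (Fin N))} (hT : IsTriangulation Fc)
    (A : Finset (Fin N)) :
    2 * ((edges Fc).filter (fun e => e ⊆ A)).card
      = ∑ f ∈ Fc, ((f ∩ A).card.choose 2) := by
  have step1 : 2 * ((edges Fc).filter (fun e => e ⊆ A)).card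
      = ∑ e ∈ (edges Fc).filter (fun e => e ⊆ A), (Fc.filter fun f => e ⊆ f).card := by
    rw [Finset.sum_congr rfl fun e he => hT.edge2 e (Finset.mem_filter.1 he).1]
    rw [Finset.sum_const, smul_eq_mul, mul_comm]
  rw [step1]
  have step2 : ∀ e, (Fc.filter fun f => e ⊆ f).card = ∑ f ∈ Fc, if e ⊆ f then 1 else 0 := by
    intro e; rw [Finset.card_filter]
  simp_rw [step2]
  rw [Finset.sum_comm]
  refine Finset.sum_congr rfl fun f hf => ?_
  have : ((edges Fc).filter (fun e => e ⊆ A)).filter (fun e => e ⊆ f)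
      = (f ∩ A).powersetCard 2 := by
    ext e
    simp only [Finset.mem_filter, Finset.mem_powersetCard, Finset.subset_inter_iff]
    constructor
    · rintro ⟨⟨he, heA⟩, hef⟩
      exact ⟨⟨hef, heA⟩, edges_card he⟩
    · rintro ⟨⟨hef, heA⟩, hcard⟩
      exact ⟨⟨sub_mem_edges hf hef hcard, heA⟩, hef⟩
  rw [← Finset.card_powersetCard, ← this, Finset.card_filter, Finset.sum_filter]


lemma min'_eq_of_singleton {α : Type*} [LinearOrder α] {s : Finset α} {v : α}
    (h : s = {v}) (H : s.Nonempty) : s.min' H = v := by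
  subst h; exact Finset.min'_singleton v

lemma lk_sum {Fc : Finset (Finset (Fin N))} (hT : IsTriangulation Fc) (A : Finset (Fin N))
    (g : Finset (Fin N) → ℝ) :
    ∑ p ∈ Lk Fc A, g p.1 = ∑ f ∈ Fc.filter (fun f => (f ∩ A).card = 1), g (f \ A) := by
  have hLk : ∀ p : Finset (Fin N) × Fin N, p ∈ Lk Fc A ↔
      p.1 ∈ edges Fc ∧ (∀ x ∈ p.1, x ∉ A) ∧ p.2 ∈ A ∧ insert p.2 p.1 ∈ Fc := by
    intro p
    unfold Lk
    simp only [Finset.mem_filter, Finset.mem_product, Finset.mem_univ, and_true, and_assoc]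
  -- facts about elements of Lk
  have hinter : ∀ p : Finset (Fin N) × Fin N, p ∈ Lk Fc A →
      insert p.2 p.1 ∩ A = {p.2} := by
    intro p hp
    obtain ⟨hpe, hout, hp2, hfFc⟩ := (hLk p).1 hp
    ext x
    simp only [Finset.mem_inter, Finset.mem_insert, Finset.mem_singleton]
    constructor
    · rintro ⟨rfl | hx, hxA⟩
      · rfl
      · exact absurd hxA (hout x hx)
    · rintro rfl
      exact ⟨Or.inl rfl, hp2⟩
  have hsdiff : ∀ p : Finset (Fin N) × Fin N, p ∈ Lk Fc A →
      insert p.2 p.1 \ A = p.1 := by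
    intro p hp
    obtain ⟨hpe, hout, hp2, hfFc⟩ := (hLk p).1 hp
    ext x
    simp only [Finset.mem_sdiff, Finset.mem_insert]
    constructor
    · rintro ⟨rfl | hx, hxA⟩
      · exact absurd hp2 hxA
      · exact hx
    · intro hx
      exact ⟨Or.inr hx, hout x hx⟩
  -- facts about elements of the filtered face set
  have hfface : ∀ f ∈ Fc.filter (fun f => (f ∩ A).card = 1), (f ∩ A).Nonempty := by
    intro f hf
    rw [← Finset.card_pos, (Finset.mem_filter.1 hf).2]
    norm_num
  refine Finset.sum_bij' (i := fun p _ => insert p.2 p.1)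
    (j := fun f hf => (f \ A, (f ∩ A).min' (hfface f hf))) ?_ ?_ ?_ ?_ ?_
  · -- i maps into the filtered set
    intro p hp
    obtain ⟨hpe, hout, hp2, hfFc⟩ := (hLk p).1 hp
    rw [Finset.mem_filter]
    exact ⟨hfFc, by rw [hinter p hp]; simp⟩
  · -- j maps into Lk
    intro f hf
    obtain ⟨hfFc, hc1⟩ := Finset.mem_filter.1 hf
    obtain ⟨v, hv⟩ := Finset.card_eq_one.1 hc1
    have hvmem : v ∈ f ∩ A := hv ▸ Finset.mem_singleton_self v
    have hvf : v ∈ f := (Finset.mem_inter.1 hvmem).1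
    have hvA : v ∈ A := (Finset.mem_inter.1 hvmem).2
    have hmin : (f ∩ A).min' (hfface f hf) = v := min'_eq_of_singleton hv _
    have hins : insert v (f \ A) = f := by
      ext x
      simp only [Finset.mem_insert, Finset.mem_sdiff]
      constructor
      · rintro (rfl | ⟨hx, _⟩)
        · exact hvf
        · exact hx
      · intro hx
        by_cases hxA : x ∈ A
        · left
          have : x ∈ f ∩ A := Finset.mem_inter.2 ⟨hx, hxA⟩
          rw [hv] at this
          exact Finset.mem_singleton.1 this
        · exact Or.inr ⟨hx, hxA⟩
    have hcd : (f \ A).card = 2 := by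
      have h3 := hT.card3 f hfFc
      have := Finset.card_inter_add_card_sdiff f A
      omega
    rw [hLk]
    refine ⟨?_, ?_, ?_, ?_⟩
    · exact sub_mem_edges hfFc (Finset.sdiff_subset) hcd
    · intro x hx; exact (Finset.mem_sdiff.1 hx).2
    · simpa [hmin] using hvA
    · simpa [hmin, hins] using hfFc
  · -- left inverse
    intro p hp
    have h1 := hsdiff p hp
    have h2 := hinter p hp
    exact Prod.ext (by simpa using h1)
      (min'_eq_of_singleton h2 (by rw [h2]; exact Finset.singleton_nonempty _))
  · -- right inverse
    intro f hf
    obtain ⟨hfFc, hc1⟩ := Finset.mem_filter.1 hf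
    obtain ⟨v, hv⟩ := Finset.card_eq_one.1 hc1
    have hvmem : v ∈ f ∩ A := hv ▸ Finset.mem_singleton_self v
    have hvf : v ∈ f := (Finset.mem_inter.1 hvmem).1
    have hmin : (f ∩ A).min' (hfface f hf) = v := min'_eq_of_singleton hv _
    show insert ((f ∩ A).min' (hfface f hf)) (f \ A) = f
    rw [hmin]
    ext x
    simp only [Finset.mem_insert, Finset.mem_sdiff]
    constructor
    · rintro (rfl | ⟨hx, _⟩)
      · exact hvf
      · exact hx
    · intro hx
      by_cases hxA : x ∈ A
      · left
        have : x ∈ f ∩ A := Finset.mem_inter.2 ⟨hx, hxA⟩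
        rw [hv] at this
        exact Finset.mem_singleton.1 this
      · exact Or.inr ⟨hx, hxA⟩
  · -- compatibility of the summands
    intro p hp
    rw [hsdiff p hp]

/-- The per-face upper bound on the angles at vertices in `A`. -/
lemma sum_ang_le {Fc : Finset (Finset (Fin N))} (hT : IsTriangulation Fc)
    {I : Finset (Fin N) → ℝ} (hI : ∀ e ∈ edges Fc, 0 ≤ I e)
    {r : Fin N → ℝ} (hr : ∀ i, 0 < r i) (A : Finset (Fin N)) {f : Finset (Fin N)}
    (hf : f ∈ Fc) :
    ∑ i ∈ A, ang I r f i ≤ (if (f ∩ A).card = 1 then π - Lam (I (f \ A)) else 0)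
      + π * ((f ∩ A).card.choose 2 : ℕ) - 2 * π * (if f ⊆ A then (1:ℝ) else 0) := by
  have hc3 : f.card = 3 := hT.card3 f hf
  have hres : ∑ i ∈ A, ang I r f i = ∑ i ∈ f ∩ A, ang I r f i := by
    refine (Finset.sum_subset Finset.inter_subset_right fun i hiA hni => ?_).symm
    exact ang_of_notMem I r fun hif => hni (Finset.mem_inter.2 ⟨hif, hiA⟩)
  rw [hres]
  have hle3 : (f ∩ A).card ≤ 3 := hc3 ▸ Finset.card_le_card Finset.inter_subset_left
  have hpi : ∑ i ∈ f ∩ A, ang I r f i ≤ π := by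
    have hml : ∑ i ∈ f ∩ A, ang I r f i ≤ ∑ i ∈ f, ang I r f i :=
      Finset.sum_le_sum_of_subset_of_nonneg Finset.inter_subset_left
        (fun i _ _ => ang_nonneg I r f i)
    have hface := sum_ang_face hT hI hr hf
    linarith
  have hnotsub : (f ∩ A).card ≠ 3 → ¬ f ⊆ A := by
    intro h hsub
    exact h (by rw [Finset.inter_eq_left.2 hsub, hc3])
  obtain h0 | h1 | h2 | h3 : (f ∩ A).card = 0 ∨ (f ∩ A).card = 1 ∨ (f ∩ A).card = 2
      ∨ (f ∩ A).card = 3 := by omega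
  · -- |f ∩ A| = 0
    have hemp : f ∩ A = ∅ := Finset.card_eq_zero.1 h0
    have hnsub : ¬ f ⊆ A := hnotsub (by omega)
    rw [hemp]
    simp [hnsub]
  · -- |f ∩ A| = 1
    obtain ⟨v, hv⟩ := Finset.card_eq_one.1 h1
    have hnsub : ¬ f ⊆ A := hnotsub (by omega)
    have hvmem : v ∈ f ∩ A := hv ▸ Finset.mem_singleton_self v
    have hvf : v ∈ f := (Finset.mem_inter.1 hvmem).1
    have hvA : v ∈ A := (Finset.mem_inter.1 hvmem).2
    rw [hv, Finset.sum_singleton, if_pos (by simp), if_neg hnsub]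
    simp only [Finset.card_singleton]
    norm_num
    have hcd : (f \ A).card = 2 := by
      have := Finset.card_inter_add_card_sdiff f A
      omega
    obtain ⟨j, k, hjk, hjkeq⟩ := Finset.card_eq_two.1 hcd
    have hjmem : j ∈ f \ A := by rw [hjkeq]; simp
    have hkmem : k ∈ f \ A := by rw [hjkeq]; simp
    have hjf := (Finset.mem_sdiff.1 hjmem).1
    have hjA := (Finset.mem_sdiff.1 hjmem).2
    have hkf := (Finset.mem_sdiff.1 hkmem).1
    have hkA := (Finset.mem_sdiff.1 hkmem).2
    have hvj : v ≠ j := fun h => hjA (h ▸ hvA)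
    have hvk : v ≠ k := fun h => hkA (h ▸ hvA)
    have hfeq : ({v, j, k} : Finset (Fin N)) = f := by
      apply Finset.eq_of_subset_of_card_le
      · intro x hx
        simp only [Finset.mem_insert, Finset.mem_singleton] at hx
        rcases hx with rfl | rfl | rfl <;> assumption
      · rw [hc3, Finset.card_insert_of_notMem (by simp [hvj, hvk]), Finset.card_pair hjk]
    rw [hjkeq, ← hfeq, ang_eq I r hvj hvk hjk]
    exact lam_cosAng_le (hI _ (pair_mem_edges hf hvf hjf hvj))
      (hI _ (pair_mem_edges hf hvf hkf hvk)) (hI _ (pair_mem_edges hf hjf hkf hjk)) hr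
  · -- |f ∩ A| = 2
    have hnsub : ¬ f ⊆ A := hnotsub (by omega)
    rw [if_neg (by omega), if_neg hnsub, h2]
    norm_num
    linarith [hpi]
  · -- |f ∩ A| = 3
    have hsub : f ⊆ A := by
      have heq : f ∩ A = f :=
        Finset.eq_of_subset_of_card_le Finset.inter_subset_left (by omega)
      exact Finset.inter_eq_left.1 heq
    rw [if_neg (by omega), if_pos hsub, h3]
    norm_num
    linarith [hpi]

/-- for every r ∈ ℝ^N_{>0} the extended curvature vector K̃(r)
lies in Ȳ: Σ_i K̃_i = 2πχ(M) and
Σ_{i∈A} K̃_i ≥ −Σ_{(e,v)∈Lk(A)}(π − Λ(I_e)) + 2πχ(F_A) for every nonempty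
proper A ⊂ V. -/
theorem stmt14 {N : ℕ} (Fc : Finset (Finset (Fin N))) (hT : IsTriangulation Fc)
    (I : Finset (Fin N) → ℝ) (hI : ∀ e ∈ edges Fc, 0 ≤ I e)
    (r : Fin N → ℝ) (hr : ∀ i, 0 < r i) :
    (∑ i, Kt Fc I r i) = 2 * π * (chi Fc : ℝ) ∧
    ∀ A : Finset (Fin N), A.Nonempty → A ≠ Finset.univ →
      Ybound Fc I A ≤ ∑ i ∈ A, Kt Fc I r i := by
  have hKt : ∀ i, Kt Fc I r i = 2 * π - ∑ f ∈ Fc, ang I r f i := Kt_eq Fc I r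
  constructor
  · -- total curvature identity
    have hface : ∀ f ∈ Fc, ∑ i, ang I r f i = π := by
      intro f hf
      rw [← Finset.sum_subset (Finset.subset_univ f) (fun i _ hi => ang_of_notMem I r hi)]
      exact sum_ang_face hT hI hr hf
    have h2E : 2 * (edges Fc).card = 3 * Fc.card := by
      have hc := count_EA hT (Finset.univ : Finset (Fin N))
      rw [Finset.filter_true_of_mem (fun e _ => Finset.subset_univ e)] at hc
      rw [Finset.sum_congr rfl (fun f hf => by rw [Finset.inter_univ, hT.card3 f hf])] at hc
      simpa [Finset.sum_const, mul_comm] using hc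
    simp only [hKt]
    rw [Finset.sum_sub_distrib, Finset.sum_const, Finset.card_univ, Fintype.card_fin,
      Finset.sum_comm, Finset.sum_congr rfl hface, Finset.sum_const, nsmul_eq_mul,
      nsmul_eq_mul]
    have h2E' : (2:ℝ) * ((edges Fc).card : ℝ) = 3 * (Fc.card : ℝ) := by exact_mod_cast h2E
    unfold chi
    push_cast
    linear_combination π * h2E'
  · -- the inequalities
    intro A hA hAne
    have hexp : ∑ i ∈ A, Kt Fc I r i
        = 2 * π * A.card - ∑ f ∈ Fc, ∑ i ∈ A, ang I r f i := by
      simp only [hKt]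
      rw [Finset.sum_sub_distrib, Finset.sum_const, Finset.sum_comm, nsmul_eq_mul]
      ring
    have hSle : ∑ f ∈ Fc, ∑ i ∈ A, ang I r f i
        ≤ ∑ f ∈ Fc, ((if (f ∩ A).card = 1 then π - Lam (I (f \ A)) else 0)
          + π * ((f ∩ A).card.choose 2 : ℕ) - 2 * π * (if f ⊆ A then (1:ℝ) else 0)) :=
      Finset.sum_le_sum fun f hf => sum_ang_le hT hI hr A hf
    have hsplit : ∑ f ∈ Fc, ((if (f ∩ A).card = 1 then π - Lam (I (f \ A)) else 0)
          + π * ((f ∩ A).card.choose 2 : ℕ) - 2 * π * (if f ⊆ A then (1:ℝ) else 0))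
        = (∑ p ∈ Lk Fc A, (π - Lam (I p.1)))
          + π * (2 * (((edges Fc).filter (fun e => e ⊆ A)).card : ℝ))
          - 2 * π * ((Fc.filter (fun f => f ⊆ A)).card : ℝ) := by
      rw [Finset.sum_sub_distrib, Finset.sum_add_distrib]
      congr 1
      congr 1
      · -- the link part
        rw [lk_sum hT A (fun e => π - Lam (I e))]
        exact (Finset.sum_filter _ _).symm
      · -- the edge-count part
        rw [← Finset.mul_sum]
        congr 1
        exact_mod_cast (count_EA hT A).symm
      · -- the face part
        rw [← Finset.mul_sum, Finset.sum_boole]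
    unfold Ybound chiSub
    push_cast
    linarith [hexp, hSle, hsplit]

end IDCP
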